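/- arXiv:1803.05461 — 5 statements merged into one kernel-verified Lean document; each statement's English description precedes it below -/
import Mathlib

section
/- Let Γ be a countable group acting in a Borel way on a standard Borel space X. For every Borel graph G on X of bounded vertex degree (i.e., every vertex has degree at most some fixed d), there exists an integer m > 0 and a Borel coloring ψ : X → Fin 2^m (equivalently ψ : X → {0,1}^m) such that ψ(p) ≠ ψ(q) whenever p and q are adjacent in G. -/
/-!
Projecting a Borel set whose sections have at most `d` points gives a Borel set: by induction
on `d`, the section minima for a Borel linear order form a Borel set on which the projection is
injective, so Lusin–Souslin applies. Hence "every neighbour of `p` satisfies `P`" is a Borel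
condition on `p`. A countable basis of a compatible Polish topology then covers `X` by Borel
independent sets `U ∩ {p | no neighbour of p lies in U}`, which yields a Borel proper coloring
`c : X → ℕ`. Finally the vertices are recolored greedily level by level along `c`, each taking the
least color not used by its neighbours of lower level; this color is at most `d`, and the
recoloring is Borel since each level is handled by one Borel step.
-/

open Set

universe u

theorem Function.iterate_apply_eq_of_lt {X α : Type*} (c : X → ℕ) {F : (X → α) → X → α}
    (hF : ∀ ξ ξ' p, (∀ q, c q < c p → ξ q = ξ' q) → F ξ p = F ξ' p) (ξ : X → α) {n : ℕ} {p : X}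
    (hp : c p < n) : F^[n] ξ p = F^[c p + 1] ξ p := by
  have hsucc : ∀ n p, c p < n → F^[n + 1] ξ p = F^[n] ξ p := by
    intro n
    induction n with
    | zero => exact fun p hp => absurd hp (Nat.not_lt_zero _)
    | succ n ih =>
      intro p hp
      rw [Function.iterate_succ_apply']
      conv_rhs => rw [Function.iterate_succ_apply']
      exact hF _ _ p fun q hq => ih q (by omega)
  induction n, Nat.succ_le_of_lt hp using Nat.le_induction with
  | base => rfl
  | succ n hn ih => rw [hsucc n p (by omega), ih (by omega)]

theorem Set.exists_le_forall_ne_of_encard_le {α : Type*} {s : Set α} {d : ℕ} (hs : s.encard ≤ d)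
    (f : α → ℕ) : ∃ k ≤ d, ∀ a ∈ s, f a ≠ k := by
  by_contra! h
  have hsub : (Finset.Iic d : Set ℕ) ⊆ f '' s := fun k hk => h k (Finset.mem_Iic.1 hk)
  have := (encard_le_encard hsub).trans ((encard_image_le f s).trans hs)
  rw [encard_coe_eq_coe_finsetCard, Nat.card_Iic] at this
  norm_cast at this
  omega

section Greedy

variable {X : Type*} {G : X → X → Prop}

noncomputable def greedyRecolor (G : X → X → Prop) (c ξ : X → ℕ) (p : X) : ℕ :=
  sInf {k | ∀ q, G p q → c q < c p → ξ q ≠ k}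

/-- The `n`-th iterate of `greedyRecolor G c` is already final on `{p | c p < n}`. -/
noncomputable def greedyColoring (G : X → X → Prop) (c : X → ℕ) (p : X) : ℕ :=
  (greedyRecolor G c)^[c p + 1] 0 p

theorem greedyRecolor_congr {c ξ ξ' : X → ℕ} {p : X} (h : ∀ q, c q < c p → ξ q = ξ' q) :
    greedyRecolor G c ξ p = greedyRecolor G c ξ' p := by
  simp +contextual [greedyRecolor, h]

variable {d : ℕ} (hdeg : ∀ p, {q | G p q}.encard ≤ d)
include hdeg

theorem exists_le_forall_adj_ne (c ξ : X → ℕ) (p : X) :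
    ∃ k ≤ d, ∀ q, G p q → c q < c p → ξ q ≠ k :=
  let ⟨k, hkd, hk⟩ := exists_le_forall_ne_of_encard_le (hdeg p) ξ
  ⟨k, hkd, fun q hq _ => hk q hq⟩

theorem greedyRecolor_le (c ξ : X → ℕ) (p : X) : greedyRecolor G c ξ p ≤ d := by
  obtain ⟨k, hkd, hk⟩ := exists_le_forall_adj_ne hdeg c ξ p
  exact le_trans (Nat.sInf_le hk) hkd

theorem greedyRecolor_ne {c ξ : X → ℕ} {p q : X} (hpq : G p q) (hlt : c q < c p) :
    greedyRecolor G c ξ p ≠ ξ q := by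
  obtain ⟨k, -, hk⟩ := exists_le_forall_adj_ne hdeg c ξ p
  have hmem : greedyRecolor G c ξ p ∈ {k | ∀ q, G p q → c q < c p → ξ q ≠ k} :=
    Nat.sInf_mem ⟨k, hk⟩
  exact (hmem q hpq hlt).symm

theorem greedyColoring_le (c : X → ℕ) (p : X) : greedyColoring G c p ≤ d := by
  rw [greedyColoring, Function.iterate_succ_apply']
  exact greedyRecolor_le hdeg c _ p

theorem greedyColoring_ne_of_lt {c : X → ℕ} {p q : X} (hpq : G p q) (hlt : c q < c p) :
    greedyColoring G c p ≠ greedyColoring G c q := by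
  have hq := Function.iterate_apply_eq_of_lt c (F := greedyRecolor G c)
    (fun _ _ _ => greedyRecolor_congr) 0 hlt
  rw [greedyColoring, greedyColoring, ← hq, Function.iterate_succ_apply']
  exact greedyRecolor_ne hdeg hpq hlt

theorem greedyColoring_ne_of_adj (hsym : ∀ p q, G p q → G q p) {c : X → ℕ}
    (hc : ∀ p q, G p q → c p ≠ c q) {p q : X} (hpq : G p q) :
    greedyColoring G c p ≠ greedyColoring G c q := by
  rcases (hc p q hpq).lt_or_gt with h | h
  · exact (greedyColoring_ne_of_lt hdeg (hsym p q hpq) h).symm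
  · exact greedyColoring_ne_of_lt hdeg hpq h

end Greedy

-- One universe for both factors, since the induction replaces `X` by `X × Y`.
theorem measurableSet_image_fst_of_encard_le {X Y : Type u} [MeasurableSpace X]
    [StandardBorelSpace X] [MeasurableSpace Y] [StandardBorelSpace Y] (d : ℕ) {R : Set (X × Y)}
    (hR : MeasurableSet R) (hd : ∀ x, {y | (x, y) ∈ R}.encard ≤ d) :
    MeasurableSet (Prod.fst '' R) := by
  induction d generalizing X R with
  | zero =>
    convert MeasurableSet.empty
    refine image_eq_empty.2 (eq_empty_of_forall_notMem fun ⟨x, y⟩ hxy => ?_)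
    exact (encard_eq_zero.1 (nonpos_iff_eq_zero.1 (hd x))).subset hxy
  | succ d ih =>
    obtain ⟨e, he⟩ := MeasureTheory.exists_measurableEmbedding_real Y
    -- `((x, y), y') ∈ T` when `y'` lies below `y` in the section of `R` over `x`
    set T : Set ((X × Y) × Y) := {z | z.1 ∈ R ∧ (z.1.1, z.2) ∈ R ∧ e z.2 < e z.1.2}
    have hT : MeasurableSet T :=
      (measurable_fst hR).inter
        ((((measurable_fst.comp measurable_fst).prodMk measurable_snd) hR).inter
          (measurableSet_lt (he.measurable.comp measurable_snd)
            (he.measurable.comp (measurable_snd.comp measurable_fst))))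
    have hTd : ∀ z : X × Y, {y' | (z, y') ∈ T}.encard ≤ d := by
      intro z
      by_cases hz : z ∈ R
      · have hsub : {y' | (z, y') ∈ T} ⊆ {y | (z.1, y) ∈ R} \ {z.2} :=
          fun y' hy' => ⟨hy'.2.1, fun h => (h ▸ hy'.2.2).false⟩
        have h := hd z.1
        rw [← encard_sdiff_singleton_add_one (s := {y | (z.1, y) ∈ R}) hz] at h
        exact (encard_le_encard hsub).trans ((ENat.add_le_add_iff_right ENat.one_ne_top).1 h)
      · exact (encard_eq_zero.2 (eq_empty_of_forall_notMem fun y' hy' => hz hy'.1)).trans_le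
          zero_le
    -- the set of section minima
    set Rmin := R \ Prod.fst '' T
    have hinj : InjOn Prod.fst Rmin := by
      rintro ⟨x, y⟩ ⟨hy, hy_min⟩ ⟨x', y'⟩ ⟨hy', hy'_min⟩ (rfl : x = x')
      rcases lt_trichotomy (e y) (e y') with h | h | h
      · exact absurd ⟨((x, y'), y), ⟨hy', hy, h⟩, rfl⟩ hy'_min
      · rw [he.injective h]
      · exact absurd ⟨((x, y), y'), ⟨hy, hy', h⟩, rfl⟩ hy_min
    have himage : Prod.fst '' Rmin = Prod.fst '' R := by
      refine (image_mono sdiff_subset).antisymm ?_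
      rintro x ⟨⟨x, y⟩, hxy, rfl⟩
      obtain ⟨y₀, hy₀, hmin⟩ := exists_min_image {y | (x, y) ∈ R} e
        (finite_of_encard_le_coe (hd x)) ⟨y, hxy⟩
      refine ⟨(x, y₀), ⟨hy₀, ?_⟩, rfl⟩
      rintro ⟨⟨_, y'⟩, ⟨-, hy', hlt⟩, rfl⟩
      exact (hmin y' hy').not_gt hlt
    rw [← himage]
    exact (hR.diff (ih hT hTd)).image_of_measurable_injOn measurable_fst hinj

section BorelGraph

variable {X : Type*} [MeasurableSpace X] {G : X → X → Prop}

theorem exists_measurable_nat_coloring_of_cover {ι : Type*} [Countable ι] {E : ι → Set X}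
    (hE : ∀ i, MeasurableSet (E i)) (hcover : ∀ p, ∃ i, p ∈ E i)
    (hindep : ∀ i p q, p ∈ E i → q ∈ E i → ¬ G p q) :
    ∃ c : X → ℕ, Measurable c ∧ ∀ p q, G p q → c p ≠ c q := by
  classical
  obtain ⟨f, hf⟩ := Countable.exists_injective_nat ι
  have hcover' : ∀ p, ∃ n, p ∈ ⋃ i ∈ f ⁻¹' {n}, E i :=
    fun p => let ⟨i, hi⟩ := hcover p; ⟨f i, mem_biUnion rfl hi⟩
  refine ⟨fun p => Nat.find (hcover' p),
    measurable_find hcover' fun n => .biUnion (to_countable _) fun i _ => hE i,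
    fun p q hpq h => ?_⟩
  obtain ⟨i, hi, hpi⟩ := mem_iUnion₂.1 (Nat.find_spec (hcover' p))
  obtain ⟨j, hj, hqj⟩ := mem_iUnion₂.1 (Nat.find_spec (hcover' q))
  have hij : i = j := hf ((hi.trans h).trans hj.symm)
  exact hindep i p q hpi (hij ▸ hqj) hpq

variable [StandardBorelSpace X] (hG : MeasurableSet {pq : X × X | G pq.1 pq.2}) {d : ℕ}
  (hdeg : ∀ p, {q | G p q}.encard ≤ d)
include hG hdeg

theorem measurableSet_setOf_forall_adj {P : Set (X × X)} (hP : MeasurableSet P) :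
    MeasurableSet {p | ∀ q, G p q → (p, q) ∈ P} := by
  have hsec : ∀ p, {q | (p, q) ∈ {pq : X × X | G pq.1 pq.2} \ P}.encard ≤ d :=
    fun p => (encard_le_encard fun _ hq => hq.1).trans (hdeg p)
  have : {p | ∀ q, G p q → (p, q) ∈ P} = (Prod.fst '' ({pq : X × X | G pq.1 pq.2} \ P))ᶜ := by
    ext p
    simp
  rw [this]
  exact (measurableSet_image_fst_of_encard_le d (hG.diff hP) hsec).compl

theorem exists_measurable_nat_coloring (hirr : ∀ p, ¬ G p p) :
    ∃ c : X → ℕ, Measurable c ∧ ∀ p q, G p q → c p ≠ c q := by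
  obtain ⟨τ, hborel, hpolish⟩ := StandardBorelSpace.polish (α := X)
  obtain ⟨B, hBc, -, hB⟩ := TopologicalSpace.exists_countable_basis X
  have := hBc.to_subtype
  refine exists_measurable_nat_coloring_of_cover (ι := B)
    (E := fun U => U ∩ {p | ∀ q, G p q → (p, q) ∈ univ ×ˢ (U : Set X)ᶜ}) (fun U => ?_)
    (fun p => ?_) fun U p q hp hq hpq => (hp.2 q hpq).2 hq.1
  · have hU := (hB.isOpen U.2).measurableSet
    exact hU.inter (measurableSet_setOf_forall_adj hG hdeg (MeasurableSet.univ.prod hU.compl))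
  · have hN : IsOpen {q | G p q}ᶜ := (finite_of_encard_le_coe (hdeg p)).isClosed.isOpen_compl
    obtain ⟨U, hUB, hpU, hUN⟩ := hB.exists_subset_of_mem_open (hirr p) hN
    exact ⟨⟨U, hUB⟩, hpU, fun q hq => ⟨trivial, fun hqU => hUN hqU hq⟩⟩

theorem measurable_greedyRecolor {c ξ : X → ℕ} (hc : Measurable c) (hξ : Measurable ξ) :
    Measurable (greedyRecolor G c ξ) := by
  classical
  have hex (p : X) : ∃ k, ∀ q, G p q → c q < c p → ξ q ≠ k :=
    let ⟨k, _, hk⟩ := exists_le_forall_adj_ne hdeg c ξ p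
    ⟨k, hk⟩
  have : greedyRecolor G c ξ = fun p => Nat.find (hex p) := funext fun p => Nat.sInf_def (hex p)
  rw [this]
  refine measurable_find hex fun k => measurableSet_setOf_forall_adj hG hdeg
    (P := {pq | c pq.2 < c pq.1 → ξ pq.2 ≠ k}) ?_
  measurability

theorem measurable_greedyColoring {c : X → ℕ} (hc : Measurable c) :
    Measurable (greedyColoring G c) := by
  have hiter (n : ℕ) : Measurable ((greedyRecolor G c)^[n] 0) := by
    induction n with
    | zero => exact measurable_const
    | succ n ih =>
      rw [Function.iterate_succ_apply']
      exact measurable_greedyRecolor hG hdeg hc ih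
  exact (measurable_from_prod_countable_left
    (f := fun pn : X × ℕ => (greedyRecolor G c)^[pn.2 + 1] 0 pn.1) fun n => hiter (n + 1)).comp
    (measurable_id.prodMk hc)

end BorelGraph

/-- Kechris–Solecki–Todorcevic for bounded-degree Borel graphs: a Borel graph of
vertex degree at most `d` on a standard Borel space admits a Borel coloring
into `{0,1}^m` for some `m > 0`. -/
theorem stmt0 {X : Type} [MeasurableSpace X] [StandardBorelSpace X]
    (G : X → X → Prop)
    (hsym : ∀ p q, G p q → G q p)
    (hirr : ∀ p, ¬ G p p)
    (hmeas : MeasurableSet {pq : X × X | G pq.1 pq.2})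
    (d : ℕ)
    (hdeg : ∀ p, {q | G p q}.Finite ∧ {q | G p q}.ncard ≤ d) :
    ∃ m : ℕ, 0 < m ∧ ∃ ψ : X → (Fin m → Bool),
      Measurable ψ ∧ ∀ p q, G p q → ψ p ≠ ψ q := by
  have hdeg' (p : X) : {q | G p q}.encard ≤ d := by
    rw [← (hdeg p).1.cast_ncard_eq]
    exact_mod_cast (hdeg p).2
  obtain ⟨c, hc, hcG⟩ := exists_measurable_nat_coloring hmeas hdeg' hirr
  set φ := greedyColoring G c
  refine ⟨d + 1, d.succ_pos, fun p j => decide (φ p = j),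
    (measurable_from_nat (f := fun n (j : Fin (d + 1)) => decide (n = j))).comp
      (measurable_greedyColoring hmeas hdeg' hc), fun p q hpq hψ => ?_⟩
  have h := congrFun hψ ⟨φ p, Nat.lt_succ_of_le (greedyColoring_le hdeg' c p)⟩
  exact greedyColoring_ne_of_adj hdeg' hsym hcG hpq (by simpa using h : φ q = φ p).symm
end

section
/- Let Γ be a countably infinite group with a fixed enumeration of generators (σ_i)_{i≥1}, and let α : Γ → X be a Borel action on a standard Borel space. For each n let G_n be the Borel graph on X with edges (p,q), p ≠ q, whenever α(σ_i)(p) = q or α(σ_i)(q) = p for some 1 ≤ i ≤ n. Then there exists a separating, proper C-coloring with respect to α, i.e., a Borel map φ : X → {0,1}^ℕ such that (i) φ is injective, and (ii) for every r > 0 there exists S_r > 0 such that for all p, q ∈ X with 0 < d_{G_r}(p,q) ≤ r, the first S_r coordinates of φ(p) and φ(q) differ. -/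
/-- The edge relation of the graph `G_n` generated by the first `n` generators:
`p ≠ q` and some `σ_i`, `1 ≤ i ≤ n`, maps `p` to `q` or `q` to `p`. -/
def graphEdge {Γ X : Type} [Group Γ] (α : Γ →* Equiv.Perm X) (σ : ℕ → Γ)
    (n : ℕ) (p q : X) : Prop :=
  p ≠ q ∧ ∃ i, 1 ≤ i ∧ i ≤ n ∧ (α (σ i) p = q ∨ α (σ i) q = p)

/-- `d_{G_r}(p,q) ≤ r`: there is a path of length at most `r` from `p` to `q`
in the graph `G_r`. -/
def graphDistLE {Γ X : Type} [Group Γ] (α : Γ →* Equiv.Perm X) (σ : ℕ → Γ)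
    (r : ℕ) (p q : X) : Prop :=
  ∃ k ≤ r, ∃ f : ℕ → X, f 0 = p ∧ f k = q ∧
    ∀ j < k, graphEdge α σ r (f j) (f (j + 1))


/-!
Fix a Borel injection `ψ : X → ℕ → Bool`. Points at `G_r`-distance at most `r` differ by an element
of the finite symmetric set `W_r` of words of length `r` in `1` and the `σ_i^{±1}`, `i ≤ r`.
Coding `p` by the prefix of `ψ p` that separates `p` from all its `W_r`-translates gives a proper
Borel colouring with countably many colours, and recolouring its colour classes greedily one after
the other (Kechris–Solecki–Todorcevic) leaves at most `|W_r| + 1` colours. The map `φ` interleaves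
`ψ`, which makes it injective, with the binary digits of these finite colourings.
-/

open Function Finset Pointwise

namespace CantorColoring

section BorelColoring

variable {X ι : Type*}

lemma measurable_firstDiff [MeasurableSpace X] {u v : X → ℕ → Bool} (hu : Measurable u)
    (hv : Measurable v) :
    Measurable fun p => PiNat.firstDiff (u p) (v p) := by
  classical
  have hex : ∀ p, ∃ n, u p n ≠ v p n ∨ u p = v p := fun p => by
    by_cases h : u p = v p
    · exact ⟨0, Or.inr h⟩
    · obtain ⟨n, hn⟩ := Function.ne_iff.1 h
      exact ⟨n, Or.inl hn⟩
  have heq : (fun p => PiNat.firstDiff (u p) (v p)) = fun p => Nat.find (hex p) := by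
    funext p
    rw [PiNat.firstDiff_def]
    split_ifs with h
    · convert Nat.find_congr' (p := fun n => u p n ≠ v p n) fun {_} => (or_iff_left h).symm
    · exact ((Nat.find_eq_zero _).2 (Or.inr (not_not.1 h))).symm
  rw [heq]
  refine measurable_find hex fun n => ?_
  exact (measurableSet_eq_fun ((measurable_pi_apply n).comp hu)
    ((measurable_pi_apply n).comp hv)).compl.union (measurableSet_eq_fun hu hv)

variable [Fintype ι] (ψ : X → ℕ → Bool) (T : ι → X → X)

noncomputable def separationDepth (p : X) : ℕ :=
  univ.sup fun i => PiNat.firstDiff (ψ p) (ψ (T i p))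

noncomputable def prefixColoring (p : X) : ℕ :=
  Encodable.encode (List.ofFn fun k : Fin (separationDepth ψ T p + 1) => ψ p k)

variable {ψ T}

lemma prefixColoring_ne (hψ : Injective ψ) {i : ι} {p : X} (hp : T i p ≠ p) :
    prefixColoring ψ T (T i p) ≠ prefixColoring ψ T p := by
  intro h
  have hlist := Encodable.encode_injective h
  have hdepth : separationDepth ψ T (T i p) = separationDepth ψ T p := by
    simpa using congrArg List.length hlist
  rw [hdepth] at hlist
  have hd : PiNat.firstDiff (ψ p) (ψ (T i p)) < separationDepth ψ T p + 1 :=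
    Nat.lt_succ_of_le (le_sup (f := fun i => PiNat.firstDiff (ψ p) (ψ (T i p))) (mem_univ i))
  exact PiNat.apply_firstDiff_ne (fun h => hp (hψ h).symm)
    (congrFun (List.ofFn_injective hlist) ⟨_, hd⟩).symm

lemma measurable_prefixColoring [MeasurableSpace X] (hψ : Measurable ψ)
    (hT : ∀ i, Measurable (T i)) :
    Measurable (prefixColoring ψ T) := by
  have hdepth : Measurable (separationDepth ψ T) :=
    (measurable_of_countable fun w : ι → ℕ => univ.sup w).comp <|
      measurable_pi_lambda _ fun i => measurable_firstDiff hψ (hψ.comp (hT i))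
  have hprefix : ∀ n, Measurable fun p =>
      Encodable.encode (List.ofFn fun k : Fin (n + 1) => ψ p k) := fun n =>
    (measurable_of_countable fun w : Fin (n + 1) → Bool => Encodable.encode (List.ofFn w)).comp
      (measurable_pi_lambda _ fun k => (measurable_pi_apply _).comp hψ)
  exact (measurable_from_prod_countable_right (f := fun z : ℕ × X =>
    Encodable.encode (List.ofFn fun k : Fin (z.1 + 1) => ψ z.2 k)) hprefix).comp
      (hdepth.prodMk measurable_id)

end BorelColoring

section Greedy

variable {X ι : Type*} (T : ι → X → X) (c : X → ℕ)

noncomputable def greedyStage : ℕ → X → ℕ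
  | 0, _ => 0
  | n + 1, p =>
    if c p = n then sInf (Set.range fun i => greedyStage n (T i p))ᶜ else greedyStage n p

noncomputable def greedyColoring (p : X) : ℕ :=
  greedyStage T c (c p + 1) p

lemma greedyStage_eq_greedyColoring {n : ℕ} {p : X} (h : c p < n) :
    greedyStage T c n p = greedyColoring T c p := by
  induction n, h using Nat.le_induction with
  | base => rfl
  | succ n hn ih => rw [greedyStage, if_neg (by omega), ih]

lemma greedyColoring_eq_sInf (p : X) :
    greedyColoring T c p = sInf (Set.range fun i => greedyStage T c (c p) (T i p))ᶜ := by
  rw [greedyColoring, greedyStage, if_pos rfl]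

lemma greedyColoring_ne_of_lt [Finite ι] {i : ι} {p : X} (h : c (T i p) < c p) :
    greedyColoring T c (T i p) ≠ greedyColoring T c p := by
  have hfree := Nat.sInf_mem
    (Set.finite_range fun j => greedyStage T c (c p) (T j p)).infinite_compl.nonempty
  rw [← greedyColoring_eq_sInf] at hfree
  exact fun heq => hfree ⟨i, (greedyStage_eq_greedyColoring T c h).trans heq⟩

lemma exists_le_card_notMem_range [Fintype ι] (f : ι → ℕ) :
    ∃ k ≤ Fintype.card ι, k ∉ Set.range f := by
  obtain ⟨k, hk, hkf⟩ := exists_mem_notMem_of_card_lt_card (s := univ.image f)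
    (t := range (Fintype.card ι + 1))
    (by simpa using (card_image_le.trans_eq card_univ).trans_lt (Nat.lt_succ_self _))
  exact ⟨k, Nat.lt_succ_iff.1 (mem_range.1 hk), by simpa using hkf⟩

lemma greedyColoring_le [Fintype ι] (p : X) : greedyColoring T c p ≤ Fintype.card ι := by
  obtain ⟨k, hk, hkf⟩ := exists_le_card_notMem_range fun i => greedyStage T c (c p) (T i p)
  rw [greedyColoring_eq_sInf]
  exact (Nat.sInf_le hkf).trans hk

variable [MeasurableSpace X] [Finite ι] {T c}

lemma measurable_greedyStage (hT : ∀ i, Measurable (T i)) (hc : Measurable c) :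
    ∀ n, Measurable (greedyStage T c n)
  | 0 => measurable_const
  | n + 1 => by
    have hnbr : Measurable fun p i => greedyStage T c n (T i p) :=
      measurable_pi_lambda _ fun i => (measurable_greedyStage hT hc n).comp (hT i)
    exact Measurable.ite (hc (measurableSet_singleton n))
      ((measurable_of_countable fun w : ι → ℕ => sInf (Set.range w)ᶜ).comp hnbr)
      (measurable_greedyStage hT hc n)

lemma measurable_greedyColoring (hT : ∀ i, Measurable (T i)) (hc : Measurable c) :
    Measurable (greedyColoring T c) :=
  (measurable_from_prod_countable_right (f := fun z : ℕ × X => greedyStage T c z.1 z.2)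
    (measurable_greedyStage hT hc)).comp
    ((hc.add_const 1).prodMk measurable_id)

end Greedy

theorem exists_measurable_coloring_le_card {X ι : Type*} [MeasurableSpace X]
    [MeasurableSpace.CountablySeparated X] [Fintype ι] {T : ι → X → X}
    (hT : ∀ i, Measurable (T i)) (hsymm : ∀ i p, ∃ j, T j (T i p) = p) :
    ∃ col : X → ℕ, Measurable col ∧ (∀ p, col p ≤ Fintype.card ι) ∧
      ∀ i p, T i p ≠ p → col (T i p) ≠ col p := by
  obtain ⟨ψ, hψm, hψi⟩ := MeasurableSpace.measurable_injection_nat_bool_of_countablySeparated X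
  set c := prefixColoring ψ T
  refine ⟨greedyColoring T c, measurable_greedyColoring hT (measurable_prefixColoring hψm hT),
    greedyColoring_le T c, fun i p hp => ?_⟩
  rcases (prefixColoring_ne hψi hp).lt_or_gt with h | h
  · exact greedyColoring_ne_of_lt T c h
  · obtain ⟨j, hj⟩ := hsymm i p
    have := greedyColoring_ne_of_lt T c (i := j) (p := T i p) (by rwa [hj])
    rw [hj] at this
    exact this.symm

theorem exists_measurable_coloring_of_inv_mem {Γ X : Type*} [Group Γ] [MeasurableSpace X]
    [MeasurableSpace.CountablySeparated X] (α : Γ →* Equiv.Perm X) (hα : ∀ γ, Measurable (α γ))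
    (W : Finset Γ) (hW : ∀ g ∈ W, g⁻¹ ∈ W) :
    ∃ col : X → ℕ, Measurable col ∧ (∀ p, col p ≤ #W) ∧
      ∀ g ∈ W, ∀ p, α g p ≠ p → col (α g p) ≠ col p := by
  obtain ⟨col, hmeas, hle, hne⟩ := exists_measurable_coloring_le_card
    (T := fun g : W => α g) (fun g => hα g) fun g p => ⟨⟨g⁻¹, hW g g.2⟩, by simp⟩
  exact ⟨col, hmeas, fun p => (hle p).trans_eq (Fintype.card_coe W),
    fun g hg p => hne ⟨g, hg⟩ p⟩

section Generators

variable {Γ X : Type} [Group Γ] [DecidableEq Γ] {σ : ℕ → Γ} {r : ℕ}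

def genSet (σ : ℕ → Γ) (r : ℕ) : Finset Γ :=
  insert 1 ((Icc 1 r).image σ ∪ ((Icc 1 r).image σ)⁻¹)

lemma inv_genSet : (genSet σ r)⁻¹ = genSet σ r := by
  ext g
  simp only [genSet, mem_inv', mem_insert, mem_union, inv_eq_one, inv_inv]
  tauto

lemma inv_mem_genSet_pow {n : ℕ} {g : Γ} (hg : g ∈ genSet σ r ^ n) : g⁻¹ ∈ genSet σ r ^ n := by
  rw [← inv_genSet, inv_pow]
  exact inv_mem_inv hg

lemma exists_mem_genSet_of_graphEdge {α : Γ →* Equiv.Perm X} {p q : X}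
    (h : graphEdge α σ r p q) : ∃ s ∈ genSet σ r, α s p = q := by
  obtain ⟨-, i, hi1, hir, hpq | hqp⟩ := h
  · have hi : σ i ∈ (Icc 1 r).image σ := mem_image_of_mem σ (mem_Icc.2 ⟨hi1, hir⟩)
    exact ⟨σ i, mem_insert_of_mem (mem_union_left _ hi), hpq⟩
  · have hi : σ i ∈ (Icc 1 r).image σ := mem_image_of_mem σ (mem_Icc.2 ⟨hi1, hir⟩)
    refine ⟨(σ i)⁻¹, mem_insert_of_mem (mem_union_right _ (inv_mem_inv hi)), ?_⟩
    simp [← hqp]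

lemma exists_mem_genSet_pow_of_graphDistLE {α : Γ →* Equiv.Perm X} {p q : X}
    (h : graphDistLE α σ r p q) : ∃ g ∈ genSet σ r ^ r, α g p = q := by
  obtain ⟨k, hkr, f, rfl, rfl, hedge⟩ := h
  have hpath : ∀ j ≤ k, ∃ g ∈ genSet σ r ^ j, α g (f 0) = f j := by
    intro j hj
    induction j with
    | zero => exact ⟨1, by simp, by simp⟩
    | succ j ih =>
      obtain ⟨g, hg, hgf⟩ := ih (by omega)
      obtain ⟨s, hs, hsf⟩ := exists_mem_genSet_of_graphEdge (hedge j (by omega))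
      refine ⟨s * g, by rw [pow_succ']; exact mul_mem_mul hs hg, ?_⟩
      rw [map_mul, Equiv.Perm.mul_apply, hgf, hsf]
  obtain ⟨g, hg, hgf⟩ := hpath k le_rfl
  exact ⟨g, pow_subset_pow_right (mem_insert_self _ _) hkr hg, hgf⟩

end Generators

lemma exists_lt_testBit_ne {m n t : ℕ} (hm : m < 2 ^ t) (hn : n < 2 ^ t) (h : m ≠ n) :
    ∃ j < t, m.testBit j ≠ n.testBit j := by
  obtain ⟨j, hj⟩ := Nat.exists_testBit_ne_of_ne h
  refine ⟨j, lt_of_not_ge fun htj => hj ?_, hj⟩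
  have hpow : 2 ^ t ≤ 2 ^ j := Nat.pow_le_pow_right two_pos htj
  rw [Nat.testBit_eq_false_of_lt (hm.trans_le hpow), Nat.testBit_eq_false_of_lt (hn.trans_le hpow)]

end CantorColoring

open CantorColoring in
theorem stmt3_general {Γ X : Type} [Group Γ]
    [MeasurableSpace X] [StandardBorelSpace X]
    (σ : ℕ → Γ)
    (α : Γ →* Equiv.Perm X)
    (hα : ∀ γ, Measurable (α γ)) :
    ∃ φ : X → ℕ → Bool, Measurable φ ∧ Function.Injective φ ∧
      ∀ r > 0, ∃ S > 0, ∀ p q : X, p ≠ q → graphDistLE α σ r p q →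
        ∃ k < S, φ p k ≠ φ q k := by
  classical
  obtain ⟨ψ, hψm, hψi⟩ := MeasurableSpace.measurable_injection_nat_bool_of_countablySeparated X
  choose col hcol_meas hcol_le hcol_ne using fun r =>
    exists_measurable_coloring_of_inv_mem α hα (genSet σ r ^ r) fun _ => inv_mem_genSet_pow
  let f : ℕ → X → ℕ → Bool := fun r p => if r = 0 then ψ p else (col r p).testBit
  have hf : ∀ r, Measurable (f r) := fun r => by
    by_cases hr : r = 0
    · simpa [f, hr] using hψm
    · simp only [f, if_neg hr]
      exact (measurable_of_countable Nat.testBit).comp (hcol_meas r)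
  refine ⟨fun p k => f k.unpair.1 p k.unpair.2,
    measurable_pi_lambda _ fun k => (measurable_pi_apply _).comp (hf _),
    fun p q h => hψi <| funext fun j => by simpa [f] using congrFun h (Nat.pair 0 j),
    fun r hr => ?_⟩
  refine ⟨Nat.pair r #(genSet σ r ^ r), hr.trans_le (Nat.left_le_pair _ _), fun p q hpq hd => ?_⟩
  obtain ⟨g, hg, rfl⟩ := exists_mem_genSet_pow_of_graphDistLE hd
  obtain ⟨j, hj, hne⟩ := exists_lt_testBit_ne ((hcol_le r p).trans_lt Nat.lt_two_pow_self)
    ((hcol_le r _).trans_lt Nat.lt_two_pow_self) (hcol_ne r g hg p (Ne.symm hpq)).symm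
  exact ⟨Nat.pair r j, Nat.pair_lt_pair_right r hj, by simpa [f, hr.ne'] using hne⟩

/-- Existence of a separating, proper Cantor coloring for any Borel action of a
countably infinite group on a standard Borel space. -/
theorem stmt3 {Γ X : Type} [Group Γ] [Countable Γ] [Infinite Γ]
    [MeasurableSpace X] [StandardBorelSpace X]
    (σ : ℕ → Γ)
    (hgen : Subgroup.closure {g : Γ | ∃ i, 1 ≤ i ∧ g = σ i} = ⊤)
    (α : Γ →* Equiv.Perm X)
    (hα : ∀ γ, Measurable (α γ)) :
    ∃ φ : X → ℕ → Bool, Measurable φ ∧ Function.Injective φ ∧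
      ∀ r > 0, ∃ S > 0, ∀ p q : X, p ≠ q → graphDistLE α σ r p q →
        ∃ k < S, φ p k ≠ φ q k :=
  stmt3_general σ α hα
end

section
/- Let Γ be a countably infinite group with generators (σ_i) and subgroups Γ_n = ⟨σ_1,…,σ_n⟩, let α : Γ ↷ X be a free Borel action on a standard Borel space, and let φ : X → C be a separating, proper C-coloring with respect to α. Define Θ(x)(γ) = φ(α(γ)(x)) ∈ C^Γ. Then the closure of Θ(X) in C^Γ (product topology) is contained in the free part Free(C^Γ): every ρ in the closure satisfies L_γ(ρ) ≠ ρ for all γ ≠ e. -/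
open SimpleGraph Filter

def generatorGraph {Γ X : Type} [Group Γ] (α : Γ →* Equiv.Perm X) (σ : ℕ → Γ) (r : ℕ) :
    SimpleGraph X where
  Adj := graphEdge α σ r
  symm := ⟨fun _ _ ⟨hne, i, hi₁, hi₂, h⟩ => ⟨hne.symm, i, hi₁, hi₂, h.symm⟩⟩
  loopless := ⟨fun _ h => h.1 rfl⟩

section GeneratorGraph

variable {Γ X : Type} [Group Γ] (α : Γ →* Equiv.Perm X) (σ : ℕ → Γ)

theorem generatorGraph_mono : Monotone (generatorGraph α σ) :=
  fun _ _ hrr' _ _ ⟨hne, i, hi₁, hi₂, h⟩ => ⟨hne, i, hi₁, hi₂.trans hrr', h⟩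

theorem graphDistLE_of_walk {r : ℕ} {p q : X} (w : (generatorGraph α σ r).Walk p q)
    (hw : w.length ≤ r) : graphDistLE α σ r p q :=
  ⟨w.length, hw, w.getVert, w.getVert_zero, w.getVert_length, fun _ hj => w.adj_getVert_succ hj⟩

theorem exists_walk_of_mem_closure {γ : Γ}
    (hγ : γ ∈ Subgroup.closure {g : Γ | ∃ i, 1 ≤ i ∧ g = σ i}) :
    ∃ n, ∀ x, ∃ w : (generatorGraph α σ n).Walk (α γ x) x, w.length ≤ n := by
  induction hγ using Subgroup.closure_induction with
  | mem g hg =>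
    obtain ⟨i, hi, rfl⟩ := hg
    refine ⟨i, fun x => ?_⟩
    by_cases hfix : α (σ i) x = x
    · rw [hfix]
      exact ⟨Walk.nil, Nat.zero_le i⟩
    · have hadj : (generatorGraph α σ i).Adj (α (σ i) x) x := ⟨hfix, i, hi, le_rfl, Or.inr rfl⟩
      exact ⟨hadj.toWalk, hadj.length_toWalk ▸ hi⟩
  | one =>
    refine ⟨0, fun x => ?_⟩
    rw [map_one, Equiv.Perm.one_apply]
    exact ⟨Walk.nil, le_rfl⟩
  | mul g h _ _ ihg ihh =>
    obtain ⟨m, hm⟩ := ihg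
    obtain ⟨n, hn⟩ := ihh
    refine ⟨m + n, fun x => ?_⟩
    obtain ⟨wg, hwg⟩ := hm (α h x)
    obtain ⟨wh, hwh⟩ := hn x
    rw [map_mul, Equiv.Perm.mul_apply]
    refine ⟨(wg.mapLe (generatorGraph_mono α σ (Nat.le_add_right m n))).append
      (wh.mapLe (generatorGraph_mono α σ (Nat.le_add_left n m))), ?_⟩
    simpa using Nat.add_le_add hwg hwh
  | inv g _ ih =>
    obtain ⟨n, hn⟩ := ih
    refine ⟨n, fun x => ?_⟩
    obtain ⟨w, hw⟩ := hn (α g⁻¹ x)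
    have hx : α g (α g⁻¹ x) = x := by simp
    exact ⟨w.reverse.copy rfl hx, by simpa using hw⟩

theorem eventually_graphDistLE (hgen : Subgroup.closure {g : Γ | ∃ i, 1 ≤ i ∧ g = σ i} = ⊤)
    (γ : Γ) : ∀ᶠ r in atTop, ∀ x, graphDistLE α σ r (α γ x) x := by
  obtain ⟨n, hn⟩ := exists_walk_of_mem_closure α σ (hgen ▸ Subgroup.mem_top γ)
  filter_upwards [eventually_ge_atTop n] with r hr x
  obtain ⟨w, hw⟩ := hn x
  exact graphDistLE_of_walk α σ (w.mapLe (generatorGraph_mono α σ hr))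
    (by simpa using hw.trans hr)

end GeneratorGraph

theorem isClosed_setOf_exists_lt_ne {ι β : Type*} [TopologicalSpace β] [DiscreteTopology β]
    (a b : ι) (S : ℕ) : IsClosed {ρ : ι → ℕ → β | ∃ k < S, ρ a k ≠ ρ b k} := by
  have hunion : {ρ : ι → ℕ → β | ∃ k < S, ρ a k ≠ ρ b k} =
      ⋃ k ∈ Set.Iio S, {ρ | ρ a k ≠ ρ b k} := by
    ext; simp
  rw [hunion]
  refine (Set.finite_Iio S).isClosed_biUnion fun k _ => ?_
  exact (isClosed_discrete {p : β × β | p.1 ≠ p.2}).preimage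
    (f := fun ρ : ι → ℕ → β => (ρ a k, ρ b k)) (by fun_prop)

theorem stmt6_general {Γ X : Type} [Group Γ]
    (σ : ℕ → Γ)
    (hgen : Subgroup.closure {g : Γ | ∃ i, 1 ≤ i ∧ g = σ i} = ⊤)
    (α : Γ →* Equiv.Perm X)
    (hfree : ∀ γ : Γ, γ ≠ 1 → ∀ x : X, α γ x ≠ x)
    (φ : X → ℕ → Bool)
    (hproper : ∀ r > 0, ∃ S > 0, ∀ p q : X, p ≠ q → graphDistLE α σ r p q →
      ∃ k < S, φ p k ≠ φ q k)
    (Θ : X → Γ → ℕ → Bool)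
    (hΘ : ∀ x γ, Θ x γ = φ (α γ x)) :
    ∀ ρ ∈ closure (Set.range Θ), ∀ γ : Γ, γ ≠ 1 →
      (fun g => ρ (g * γ)) ≠ ρ := by
  intro ρ hρ γ hγ hshift
  obtain ⟨r, hdist, hr⟩ :=
    ((eventually_graphDistLE α σ hgen γ).and (eventually_gt_atTop 0)).exists
  obtain ⟨S, -, hsep⟩ := hproper r hr
  have hrange : Set.range Θ ⊆ {ρ | ∃ k < S, ρ γ k ≠ ρ 1 k} := by
    rintro _ ⟨x, rfl⟩
    simpa [hΘ] using hsep (α γ x) x (hfree γ hγ x) (hdist x)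
  obtain ⟨k, -, hk⟩ := closure_minimal hrange (isClosed_setOf_exists_lt_ne γ 1 S) hρ
  exact hk (by simpa using congrFun (congrFun hshift 1) k)

/-- For a free Borel action `α` with a separating, proper Cantor coloring `φ`,
the closure of the image of `Θ(x)(γ) = φ(α(γ)x)` in `C^Γ` is contained in the
free part of the Bernoulli shift. -/
theorem stmt6 {Γ X : Type} [Group Γ] [Countable Γ] [Infinite Γ]
    [MeasurableSpace X] [StandardBorelSpace X]
    (σ : ℕ → Γ)
    (hgen : Subgroup.closure {g : Γ | ∃ i, 1 ≤ i ∧ g = σ i} = ⊤)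
    (α : Γ →* Equiv.Perm X) (hα : ∀ γ, Measurable (α γ))
    (hfree : ∀ γ : Γ, γ ≠ 1 → ∀ x : X, α γ x ≠ x)
    (φ : X → ℕ → Bool) (hφm : Measurable φ) (hφi : Function.Injective φ)
    (hproper : ∀ r > 0, ∃ S > 0, ∀ p q : X, p ≠ q → graphDistLE α σ r p q →
      ∃ k < S, φ p k ≠ φ q k)
    (Θ : X → Γ → ℕ → Bool)
    (hΘ : ∀ x γ, Θ x γ = φ (α γ x)) :
    ∀ ρ ∈ closure (Set.range Θ), ∀ γ : Γ, γ ≠ 1 →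
      (fun g => ρ (g * γ)) ≠ ρ :=
  stmt6_general σ hgen α hfree φ hproper Θ hΘ
end

section
/- Let Γ be a countable group, Z ⊆ Sub(Γ) a conjugation-invariant set of subgroups, α : Γ ↷ X a Borel (Γ,Z)-action (i.e., Stab_α(x) ∈ Z for every x), and φ : X → C an injective Borel map. Define Θ(x) ∈ F(H), H = Stab_α(x), by Θ(x)(Hγ) = φ(α(γ)(x)). Then Θ : X → C^Z is well-defined (independent of the coset representative), injective, and Γ-equivariant: Θ(α(δ)(x)) = L_δ(Θ(x)) for all δ, x. -/
def conjSub {Γ : Type} [Group Γ] (δ : Γ) (H : Subgroup Γ) : Subgroup Γ :=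
  Subgroup.map (MulAut.conj δ).toMonoidHom H

/-- `ρ ∈ F(H)`: a map on right cosets `Γ/H`, represented by a function on `Γ`
constant on each right coset `Hγ`. -/
def cosetMap {Γ : Type} [Group Γ] (H : Subgroup Γ) (ρ : Γ → ℕ → Bool) : Prop :=
  ∀ h ∈ H, ∀ γ, ρ (h * γ) = ρ γ

/-- The Bernoulli shift on `C^Z`. -/
def shiftC {Γ : Type} [Group Γ] (δ : Γ) (ρ : Γ → ℕ → Bool) : Γ → ℕ → Bool :=
  fun γ => ρ (δ⁻¹ * γ)

/-- The stabilizer subgroup of a point. -/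
def stabSub {Γ X : Type} [Group Γ] (α : Γ →* Equiv.Perm X) (x : X) :
    Subgroup Γ where
  carrier := {γ | α γ x = x}
  one_mem' := by simp
  mul_mem' := by
    intro a b ha hb
    simp only [Set.mem_setOf_eq, map_mul, Equiv.Perm.mul_apply] at *
    rw [hb, ha]
  inv_mem' := by
    intro a ha
    simp only [Set.mem_setOf_eq] at *
    conv_lhs => rw [← ha]
    simp

/-- The paper's `Θ(x)`; the inverse makes it constant on right cosets `Stab_α(x) γ`. -/
def orbitCode {Γ X : Type} [Group Γ] (α : Γ →* Equiv.Perm X) (φ : X → ℕ → Bool) (x : X) :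
    Γ → ℕ → Bool :=
  fun γ => φ (α γ⁻¹ x)

section

variable {Γ X : Type} [Group Γ] (α : Γ →* Equiv.Perm X)

theorem mem_stabSub_iff {x : X} {γ : Γ} : γ ∈ stabSub α x ↔ α γ x = x := Iff.rfl

theorem stabSub_apply_eq_conjSub (δ : Γ) (x : X) :
    stabSub α (α δ x) = conjSub δ (stabSub α x) := by
  ext γ
  have key : α γ (α δ x) = α δ x ↔ α (δ⁻¹ * γ * δ) x = x := by
    simp only [map_mul, map_inv, Equiv.Perm.mul_apply, Equiv.Perm.inv_eq_iff_eq]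
  simp only [conjSub, Subgroup.mem_map, MulEquiv.coe_toMonoidHom, MulAut.conj_apply,
    mem_stabSub_iff, key]
  constructor
  · intro h
    exact ⟨δ⁻¹ * γ * δ, h, by group⟩
  · rintro ⟨h, hh, rfl⟩
    simpa [mul_assoc] using hh

theorem cosetMap_orbitCode (φ : X → ℕ → Bool) (x : X) :
    cosetMap (stabSub α x) (orbitCode α φ x) := by
  intro h hh γ
  have hinv : α h⁻¹ x = x := (stabSub α x).inv_mem hh
  simp only [orbitCode, mul_inv_rev, map_mul, Equiv.Perm.mul_apply, hinv]

theorem orbitCode_apply (φ : X → ℕ → Bool) (δ : Γ) (x : X) :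
    orbitCode α φ (α δ x) = shiftC δ (orbitCode α φ x) := by
  funext γ
  simp only [orbitCode, shiftC, mul_inv_rev, inv_inv, map_mul, Equiv.Perm.mul_apply]

theorem orbitCode_injective {φ : X → ℕ → Bool} (hφ : Function.Injective φ) :
    Function.Injective (orbitCode α φ) := by
  intro x y hxy
  simpa [orbitCode] using hφ (congrFun hxy 1)

theorem measurable_orbitCode [MeasurableSpace X] (hα : ∀ γ, Measurable (α γ))
    {φ : X → ℕ → Bool} (hφ : Measurable φ) : Measurable (orbitCode α φ) :=
  measurable_pi_lambda _ fun γ => hφ.comp (hα γ⁻¹)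

end

theorem stmt13_general {Γ X : Type} [Group Γ]
    [MeasurableSpace X]
    (α : Γ →* Equiv.Perm X) (hα : ∀ γ, Measurable (α γ))
    (φ : X → ℕ → Bool) (hφm : Measurable φ) (hφi : Function.Injective φ)
    (Θ : X → Γ → ℕ → Bool)
    (hΘ : ∀ (x : X) (γ : Γ), Θ x γ = φ (α γ⁻¹ x)) :
    (∀ x : X, cosetMap (stabSub α x) (Θ x)) ∧
      Measurable Θ ∧ Function.Injective Θ ∧
      (∀ (δ : Γ) (x : X),
        stabSub α (α δ x) = conjSub δ (stabSub α x) ∧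
        Θ (α δ x) = shiftC δ (Θ x)) := by
  obtain rfl : Θ = orbitCode α φ := funext₂ hΘ
  exact ⟨cosetMap_orbitCode α φ, measurable_orbitCode α hα hφm, orbitCode_injective α hφi,
    fun δ x => ⟨stabSub_apply_eq_conjSub α δ x, orbitCode_apply α φ δ x⟩⟩

/-- For a Borel `(Γ,Z)`-action `α` and an injective Borel map `φ : X → C`, the
map `Θ(x) ∈ F(Stab_α(x))`, assigning to the right coset `Stab_α(x)·γ` the
value `φ` of the corresponding point of the orbit of `x`, is a well-defined,
injective, `Γ`-equivariant Borel map `X → C^Z`. -/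
theorem stmt13 {Γ X : Type} [Group Γ] [Countable Γ]
    [MeasurableSpace X] [StandardBorelSpace X]
    (Z : Set (Subgroup Γ)) (hZ : ∀ (δ : Γ), ∀ K ∈ Z, conjSub δ K ∈ Z)
    (α : Γ →* Equiv.Perm X) (hα : ∀ γ, Measurable (α γ))
    (hstab : ∀ x : X, stabSub α x ∈ Z)
    (φ : X → ℕ → Bool) (hφm : Measurable φ) (hφi : Function.Injective φ)
    (Θ : X → Γ → ℕ → Bool)
    (hΘ : ∀ (x : X) (γ : Γ), Θ x γ = φ (α γ⁻¹ x)) :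
    (∀ x : X, cosetMap (stabSub α x) (Θ x)) ∧
      Measurable Θ ∧ Function.Injective Θ ∧
      (∀ (δ : Γ) (x : X),
        stabSub α (α δ x) = conjSub δ (stabSub α x) ∧
        Θ (α δ x) = shiftC δ (Θ x)) :=
  stmt13_general α hα φ hφm hφi Θ hΘ
end

section
/- Let Γ be a countable group, Z ⊆ Sub(Γ) a closed conjugation-invariant set, α : Γ ↷ X a Borel (Γ,Z)-action, and φ : X → C a separating, proper C-coloring with respect to α. Let Θ(x) ∈ F(Stab_α(x)) be defined by Θ(x)(Hγ) = φ(α(γ)(x)). Then the closure of Θ(X) in C^Z (with the metric d described by: ρ_k → ρ means Stab groups converge in Sub(Γ) and values converge coset-wise) is contained in Free(C^Z): if Θ(x_n) → ρ ∈ F(H) and δ ∉ H, then ρ(H) ≠ ρ(Hδ), hence L_δ(ρ) ≠ ρ. -/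
/-!
Every group element `γ` moves each point by a bounded distance `r(γ)` in the Schreier graph of
the generators `σ i`, so properness yields a uniform window of `S` coordinates in which the colors
of `p` and `α γ p` differ whenever `α γ p ≠ p`. If `Θ (x n) → ρ` and `δ ∉ H`, then eventually
`δ ∉ Stab(x n)`, and the colors `Θ (x n) δ = φ (α δ⁻¹ (x n))` and `Θ (x n) 1 = φ (x n)` already
agree with `ρ δ` and `ρ 1` on that window, so `ρ δ ≠ ρ 1`.
-/

section GraphDist

variable {Γ X : Type} [Group Γ] {α : Γ →* Equiv.Perm X} {σ : ℕ → Γ}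

lemma graphEdge.mono {r r' : ℕ} {p q : X} (h : r ≤ r') (he : graphEdge α σ r p q) :
    graphEdge α σ r' p q := by
  obtain ⟨hne, i, hi, hir, hpq⟩ := he
  exact ⟨hne, i, hi, hir.trans h, hpq⟩

lemma graphDistLE.mono {r r' : ℕ} {p q : X} (h : r ≤ r') (hd : graphDistLE α σ r p q) :
    graphDistLE α σ r' p q := by
  obtain ⟨k, hk, f, hf0, hfk, hf⟩ := hd
  exact ⟨k, hk.trans h, f, hf0, hfk, fun j hj => (hf j hj).mono h⟩

lemma graphDistLE_refl (r : ℕ) (p : X) : graphDistLE α σ r p p :=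
  ⟨0, Nat.zero_le r, fun _ => p, rfl, rfl, fun _ hj => absurd hj (Nat.not_lt_zero _)⟩

lemma graphDistLE.step {r i : ℕ} {p q s : X} (hd : graphDistLE α σ r p q) (hi : 1 ≤ i)
    (hir : i ≤ r + 1) (hqs : α (σ i) q = s ∨ α (σ i) s = q) :
    graphDistLE α σ (r + 1) p s := by
  by_cases hq : q = s
  · exact hq ▸ hd.mono (Nat.le_succ r)
  obtain ⟨k, hk, f, hf0, hfk, hf⟩ := hd
  refine ⟨k + 1, by omega, Function.update f (k + 1) s, ?_, by simp, fun j hj => ?_⟩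
  · rw [Function.update_of_ne (by omega), hf0]
  rcases Nat.lt_succ_iff_lt_or_eq.mp hj with hj | rfl
  · rw [Function.update_of_ne (by omega), Function.update_of_ne (by omega)]
    exact (hf j hj).mono (Nat.le_succ r)
  · rw [Function.update_of_ne (by omega), Function.update_self, hfk]
    exact ⟨hq, i, hi, hir, hqs⟩

lemma exists_graphDistLE_apply
    (hgen : Subgroup.closure {g : Γ | ∃ i, 1 ≤ i ∧ g = σ i} = ⊤) (γ : Γ) :
    ∃ r, ∀ p : X, graphDistLE α σ r p (α γ p) := by
  have hγ : γ ∈ Subgroup.closure {g : Γ | ∃ i, 1 ≤ i ∧ g = σ i} := hgen ▸ Subgroup.mem_top γ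
  induction hγ using Subgroup.closure_induction_left with
  | one => exact ⟨0, fun p => by simpa using graphDistLE_refl 0 p⟩
  | mul_left g hg γ _ ih =>
    obtain ⟨i, hi, rfl⟩ := hg
    obtain ⟨r, hr⟩ := ih
    refine ⟨r + i + 1, fun p => ?_⟩
    rw [map_mul, Equiv.Perm.mul_apply]
    exact ((hr p).mono (Nat.le_add_right r i)).step hi (by omega) (Or.inl rfl)
  | inv_mul_cancel g hg γ _ ih =>
    obtain ⟨i, hi, rfl⟩ := hg
    obtain ⟨r, hr⟩ := ih
    refine ⟨r + i + 1, fun p => ?_⟩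
    rw [map_mul, Equiv.Perm.mul_apply]
    exact ((hr p).mono (Nat.le_add_right r i)).step hi (by omega) (Or.inr (by simp))

lemma exists_coord_ne_apply_of_proper
    (hgen : Subgroup.closure {g : Γ | ∃ i, 1 ≤ i ∧ g = σ i} = ⊤) (φ : X → ℕ → Bool)
    (hproper : ∀ r > 0, ∃ S > 0, ∀ p q : X, p ≠ q → graphDistLE α σ r p q →
      ∃ k < S, φ p k ≠ φ q k)
    (γ : Γ) : ∃ S, ∀ p : X, α γ p ≠ p → ∃ k < S, φ p k ≠ φ (α γ p) k := by
  obtain ⟨r, hr⟩ := exists_graphDistLE_apply (α := α) hgen γ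
  obtain ⟨S, -, hS⟩ := hproper (r + 1) r.succ_pos
  exact ⟨S, fun p hp => hS p (α γ p) (Ne.symm hp) ((hr p).mono (Nat.le_succ r))⟩

end GraphDist

theorem stmt15_general {Γ X : Type} [Group Γ]
    (σ : ℕ → Γ)
    (hgen : Subgroup.closure {g : Γ | ∃ i, 1 ≤ i ∧ g = σ i} = ⊤)
    (α : Γ →* Equiv.Perm X)
    (φ : X → ℕ → Bool)
    (hproper : ∀ r > 0, ∃ S > 0, ∀ p q : X, p ≠ q → graphDistLE α σ r p q →
      ∃ k < S, φ p k ≠ φ q k)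
    (Θ : X → Γ → ℕ → Bool)
    (hΘ : ∀ (x : X) (γ : Γ), Θ x γ = φ (α γ⁻¹ x))
    (x : ℕ → X) (H : Subgroup Γ)
    (ρ : Γ → ℕ → Bool)
    (hstabconv : ∀ γ : Γ, ∃ N, ∀ n ≥ N, (γ ∈ stabSub α (x n) ↔ γ ∈ H))
    (hvalconv : ∀ (γ : Γ) (m : ℕ), ∃ N, ∀ n ≥ N, ∀ k < m, Θ (x n) γ k = ρ γ k) :
    ∀ δ : Γ, δ ∉ H → ρ δ ≠ ρ 1 ∧ ¬(conjSub δ H = H ∧ shiftC δ ρ = ρ) := by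
  intro δ hδ
  have hne : ρ δ ≠ ρ 1 := by
    obtain ⟨S, hS⟩ := exists_coord_ne_apply_of_proper hgen φ hproper δ⁻¹
    obtain ⟨n, hnH, hδS, h1S⟩ := ((Filter.eventually_atTop.2 (hstabconv δ)).and
      ((Filter.eventually_atTop.2 (hvalconv δ S)).and
        (Filter.eventually_atTop.2 (hvalconv 1 S)))).exists
    have hmoved : α δ⁻¹ (x n) ≠ x n := fun h =>
      hδ (hnH.1 ((stabSub α (x n)).inv_mem_iff.1 h))
    obtain ⟨k, hk, hφk⟩ := hS (x n) hmoved
    have hcolor1 : φ (x n) k = ρ 1 k := by simpa [hΘ] using h1S k hk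
    have hcolorδ : φ (α δ⁻¹ (x n)) k = ρ δ k := by rw [← hδS k hk, hΘ]
    intro h
    exact hφk (by rw [hcolor1, hcolorδ, h])
  refine ⟨hne, fun ⟨_, hshift⟩ => hne ?_⟩
  simpa [shiftC] using (congrFun hshift δ).symm

/-- For a Borel `(Γ,Z)`-action `α` with a separating, proper Cantor coloring
`φ`, the closure of the image of `Θ` in `C^Z` lies in the free part: if
`Θ(x_n) → ρ ∈ F(H)` (stabilizers converging in `Sub(Γ)`, values converging
coset-wise) and `δ ∉ H`, then `ρ(H) ≠ ρ(Hδ)`, hence `L_δ(ρ) ≠ ρ`. -/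
theorem stmt15 {Γ X : Type} [Group Γ] [Countable Γ]
    [MeasurableSpace X] [StandardBorelSpace X]
    (σ : ℕ → Γ)
    (hgen : Subgroup.closure {g : Γ | ∃ i, 1 ≤ i ∧ g = σ i} = ⊤)
    (Z : Set (Subgroup Γ)) (hZ : ∀ (δ : Γ), ∀ K ∈ Z, conjSub δ K ∈ Z)
    (α : Γ →* Equiv.Perm X) (hα : ∀ γ, Measurable (α γ))
    (hstab : ∀ x : X, stabSub α x ∈ Z)
    (φ : X → ℕ → Bool) (hφm : Measurable φ) (hφi : Function.Injective φ)
    (hproper : ∀ r > 0, ∃ S > 0, ∀ p q : X, p ≠ q → graphDistLE α σ r p q →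
      ∃ k < S, φ p k ≠ φ q k)
    (Θ : X → Γ → ℕ → Bool)
    (hΘ : ∀ (x : X) (γ : Γ), Θ x γ = φ (α γ⁻¹ x))
    (x : ℕ → X) (H : Subgroup Γ) (hHZ : H ∈ Z)
    (ρ : Γ → ℕ → Bool) (hρ : cosetMap H ρ)
    (hstabconv : ∀ γ : Γ, ∃ N, ∀ n ≥ N, (γ ∈ stabSub α (x n) ↔ γ ∈ H))
    (hvalconv : ∀ (γ : Γ) (m : ℕ), ∃ N, ∀ n ≥ N, ∀ k < m, Θ (x n) γ k = ρ γ k) :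
    ∀ δ : Γ, δ ∉ H → ρ δ ≠ ρ 1 ∧ ¬(conjSub δ H = H ∧ shiftC δ ρ = ρ) :=
  stmt15_general σ hgen α φ hproper Θ hΘ x H ρ hstabconv hvalconv
end
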